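/- There is an absolute constant C > 0 such that for every r > 0 and every t ≥ 0, |C₁(r,t)| ≤ C / r. -/

import Mathlib

/-- The Bessel function of the first kind of integer order `n`, defined via the
integral representation `J_n(x) = (1/(2π)) ∫_{-π}^{π} e^{i(n s + x sin s)} ds`. -/
noncomputable def besselJ (n : ℤ) (x : ℝ) : ℝ :=
  (1 / (2 * Real.pi)) *
    (∫ s in (-Real.pi)..Real.pi,
      Complex.exp (Complex.I * ((n : ℂ) * (s : ℂ) + (x : ℂ) * (Real.sin s : ℂ)))).re

/-- The radial integral kernel of the free Klein–Gordon cosine propagator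
`cos(t√(−Δ+1))/(−Δ+1)` on `ℝ³`:
`C₁(r,t) = (1/(4π)) ( r⁻¹ 𝟙_{t<r} − ∫_{max(t,r)}^∞ J_1(√(τ²−r²))/√(τ²−r²) dτ )`. -/
noncomputable def C1 (r t : ℝ) : ℝ :=
  (1 / (4 * Real.pi)) *
    ((if t < r then r⁻¹ else 0) -
      ∫ τ in Set.Ioi (max t r),
        besselJ 1 (Real.sqrt (τ ^ 2 - r ^ 2)) / Real.sqrt (τ ^ 2 - r ^ 2))

/-!
Since `J₀' = J₁` in the convention of `besselJ`, the tail integrand `h(τ) = J₁(√(τ²−r²))/√(τ²−r²)`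
satisfies `τ h(τ) = d/dτ J₀(√(τ²−r²))`. Integrating `h = τ⁻¹ · (J₀ ∘ √(·²−r²))'` by parts over
`(a, ∞)` and using only `|J₀| ≤ 1` bounds the tail by `2/a ≤ 2/r`; the indicator term adds `1/r`.
-/

open Real Set MeasureTheory Filter Topology

theorem besselJ_eq_integral_cos (n : ℤ) (x : ℝ) :
    besselJ n x = (1 / (2 * π)) * ∫ s in -π..π, cos (n * s + x * sin s) := by
  have hint : IntervalIntegrable
      (fun s : ℝ => Complex.exp (Complex.I * ((n : ℂ) * (s : ℂ) + (x : ℂ) * (sin s : ℂ))))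
      volume (-π) π := (by fun_prop : Continuous _).intervalIntegrable _ _
  rw [besselJ, ← RCLike.re_to_complex, ← intervalIntegral.intervalIntegral_re hint]
  congr 1
  refine intervalIntegral.integral_congr fun s _ => ?_
  have : Complex.I * ((n : ℂ) * (s : ℂ) + (x : ℂ) * (sin s : ℂ)) =
      ((n * s + x * sin s : ℝ) : ℂ) * Complex.I := by
    push_cast; ring
  rw [RCLike.re_to_complex, this, Complex.exp_ofReal_mul_I_re]

theorem abs_besselJ_le_one (n : ℤ) (x : ℝ) : |besselJ n x| ≤ 1 := by
  have hπ : |π - -π| = 2 * π := by rw [sub_neg_eq_add, ← two_mul, abs_of_pos (by positivity)]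
  have h := intervalIntegral.norm_integral_le_of_norm_le_const (a := -π) (b := π) (C := 1)
    (f := fun s => cos (n * s + x * sin s)) fun s _ => by simpa using abs_cos_le_one _
  rw [Real.norm_eq_abs, one_mul, hπ] at h
  rw [besselJ_eq_integral_cos, abs_mul, abs_of_pos (by positivity), one_div,
    inv_mul_le_iff₀ (by positivity), mul_one]
  exact h

theorem integral_cos_mul_cos_mul_sin (x : ℝ) :
    ∫ s in -π..π, cos s * cos (x * sin s) = 0 := by
  have := intervalIntegral.integral_comp_mul_deriv (a := -π) (b := π) (f := sin) (f' := cos)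
    (g := fun u => cos (x * u)) (fun s _ => hasDerivAt_sin s) continuous_cos.continuousOn
    (by fun_prop)
  simpa [mul_comm] using this

theorem besselJ_one_eq_integral (x : ℝ) :
    besselJ 1 x = (1 / (2 * π)) * ∫ s in -π..π, -(sin s * sin (x * sin s)) := by
  have h1 : IntervalIntegrable (fun s => cos s * cos (x * sin s)) volume (-π) π :=
    (by fun_prop : Continuous _).intervalIntegrable _ _
  have h2 : IntervalIntegrable (fun s => sin s * sin (x * sin s)) volume (-π) π :=
    (by fun_prop : Continuous _).intervalIntegrable _ _
  simp_rw [besselJ_eq_integral_cos, Int.cast_one, one_mul, cos_add, intervalIntegral.integral_neg,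
    intervalIntegral.integral_sub h1 h2, integral_cos_mul_cos_mul_sin, zero_sub]

/-- With the convention `e^{i(ns + x sin s)}`, `besselJ 1` is the classical `-J₁`, so the classical
identity `J₀' = -J₁` reads `J₀' = J₁` here. -/
theorem hasDerivAt_besselJ_zero (x : ℝ) : HasDerivAt (besselJ 0) (besselJ 1 x) x := by
  have hJ0 : besselJ 0 = fun y => (1 / (2 * π)) * ∫ s in -π..π, cos (y * sin s) := by
    funext y; simp [besselJ_eq_integral_cos]
  have hderiv := intervalIntegral.hasDerivAt_integral_of_dominated_loc_of_deriv_le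
    (F := fun y s => cos (y * sin s)) (F' := fun y s => -(sin s * sin (y * sin s)))
    (x₀ := x) (μ := volume) (a := -π) (b := π) (bound := fun _ => 1)
    (Metric.ball_mem_nhds x one_pos)
    (Eventually.of_forall fun y => (by fun_prop : Continuous _).aestronglyMeasurable)
    ((by fun_prop : Continuous _).intervalIntegrable _ _)
    ((by fun_prop : Continuous _).aestronglyMeasurable)
    (Eventually.of_forall fun s _ y _ => by
      simpa [abs_mul] using mul_le_one₀ (abs_sin_le_one s) (abs_nonneg _) (abs_sin_le_one _))
    intervalIntegrable_const
    (Eventually.of_forall fun s _ y _ => by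
      simpa [mul_comm] using ((hasDerivAt_id y).mul_const (sin s)).cos)
  rw [hJ0, besselJ_one_eq_integral]
  exact hderiv.2.const_mul _

theorem continuous_besselJ_zero : Continuous (besselJ 0) :=
  continuous_iff_continuousAt.2 fun x => (hasDerivAt_besselJ_zero x).continuousAt

section ImproperIntegral

variable {a M : ℝ} {g : ℝ → ℝ}

theorem integrableOn_and_integral_Ioi_inv_sq (ha : 0 < a) :
    IntegrableOn (fun τ : ℝ => (τ ^ 2)⁻¹) (Ioi a) ∧ ∫ τ in Ioi a, (τ ^ 2)⁻¹ = a⁻¹ := by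
  have hderiv : ∀ τ ∈ Ici a, HasDerivAt (fun τ : ℝ => -τ⁻¹) (τ ^ 2)⁻¹ τ := fun τ hτ => by
    simpa using (hasDerivAt_inv (ha.trans_le hτ).ne').fun_neg
  have hlim : Tendsto (fun τ : ℝ => -τ⁻¹) atTop (𝓝 0) := by
    simpa using (tendsto_inv_atTop_zero (𝕜 := ℝ)).neg
  have hpos : ∀ τ ∈ Ioi a, 0 ≤ (τ ^ 2)⁻¹ := fun τ _ => by positivity
  refine ⟨integrableOn_Ioi_deriv_of_nonneg' hderiv hpos hlim, ?_⟩
  rw [integral_Ioi_of_hasDerivAt_of_nonneg' hderiv hpos hlim]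
  ring

theorem norm_inv_sq_mul_le {τ : ℝ} (hg : |g τ| ≤ M) : ‖(τ ^ 2)⁻¹ * g τ‖ ≤ M * (τ ^ 2)⁻¹ := by
  rw [Real.norm_eq_abs, abs_mul, abs_of_nonneg (by positivity), mul_comm]
  gcongr

theorem integrableOn_Ioi_inv_sq_mul (ha : 0 < a) (hgc : ContinuousOn g (Ici a))
    (hgM : ∀ τ ∈ Ici a, |g τ| ≤ M) : IntegrableOn (fun τ => (τ ^ 2)⁻¹ * g τ) (Ioi a) := by
  have hcont : ContinuousOn (fun τ => (τ ^ 2)⁻¹ * g τ) (Ioi a) :=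
    ((continuousOn_id.pow 2).inv₀ fun τ hτ => pow_ne_zero 2 (ha.trans hτ).ne').mul
      (hgc.mono Ioi_subset_Ici_self)
  refine ((integrableOn_and_integral_Ioi_inv_sq ha).1.const_mul M).mono'
    (hcont.aestronglyMeasurable measurableSet_Ioi) ?_
  filter_upwards [self_mem_ae_restrict measurableSet_Ioi] with τ hτ
  exact norm_inv_sq_mul_le (hgM τ (mem_Ici_of_Ioi hτ))

theorem abs_integral_Ioi_inv_sq_mul_le (ha : 0 < a) (hgM : ∀ τ ∈ Ici a, |g τ| ≤ M) :
    |∫ τ in Ioi a, (τ ^ 2)⁻¹ * g τ| ≤ M / a := by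
  obtain ⟨hint, hval⟩ := integrableOn_and_integral_Ioi_inv_sq ha
  have hbound : ∀ᵐ τ ∂(volume.restrict (Ioi a)), ‖(τ ^ 2)⁻¹ * g τ‖ ≤ M * (τ ^ 2)⁻¹ := by
    filter_upwards [self_mem_ae_restrict measurableSet_Ioi] with τ hτ
    exact norm_inv_sq_mul_le (hgM τ (mem_Ici_of_Ioi hτ))
  simpa [integral_const_mul, hval, div_eq_mul_inv] using
    norm_integral_le_of_norm_le (hint.const_mul M) hbound

/-- Integration by parts against `τ⁻¹`: `∫ h = -g(a)/a + ∫ g/τ²`. -/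
theorem abs_integral_Ioi_le_of_hasDerivAt_mul {h : ℝ → ℝ} (ha : 0 < a)
    (hgc : ContinuousOn g (Ici a)) (hgd : ∀ τ ∈ Ioi a, HasDerivAt g (τ * h τ) τ)
    (hgM : ∀ τ ∈ Ici a, |g τ| ≤ M) :
    |∫ τ in Ioi a, h τ| ≤ 2 * M / a := by
  have hM : 0 ≤ M := (abs_nonneg _).trans (hgM a self_mem_Ici)
  by_cases hint : IntegrableOn h (Ioi a)
  swap
  · rw [integral_undef hint, abs_zero]
    positivity
  have hne : ∀ τ ∈ Ioi a, τ ≠ 0 := fun τ hτ => (ha.trans hτ).ne'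
  have huv' : IntegrableOn (fun τ => τ⁻¹ * (τ * h τ)) (Ioi a) :=
    hint.congr_fun (fun τ hτ => (inv_mul_cancel_left₀ (hne τ hτ) (h τ)).symm) measurableSet_Ioi
  have hu'v : IntegrableOn (fun τ => -(τ ^ 2)⁻¹ * g τ) (Ioi a) := by
    simpa only [neg_mul] using (integrableOn_Ioi_inv_sq_mul ha hgc hgM).fun_neg
  have h_zero : Tendsto (fun τ => τ⁻¹ * g τ) (𝓝[>] a) (𝓝 (a⁻¹ * g a)) :=
    (continuousAt_inv₀ ha.ne').continuousWithinAt.mul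
      ((hgc a self_mem_Ici).mono Ioi_subset_Ici_self)
  have h_infty : Tendsto (fun τ => τ⁻¹ * g τ) atTop (𝓝 0) :=
    tendsto_inv_atTop_zero.zero_mul_isBoundedUnder_le
      (isBoundedUnder_of_eventually_le (a := M)
        ((eventually_ge_atTop a).mono fun τ hτ => by simpa using hgM τ hτ))
  have hibp := integral_Ioi_mul_deriv_eq_deriv_mul (fun τ hτ => hasDerivAt_inv (hne τ hτ)) hgd
    huv' hu'v h_zero h_infty
  rw [setIntegral_congr_fun measurableSet_Ioi
    (fun τ hτ => inv_mul_cancel_left₀ (hne τ hτ) (h τ))] at hibp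
  simp only [neg_mul, integral_neg, zero_sub, sub_neg_eq_add] at hibp
  have hbdry : |a⁻¹ * g a| ≤ M / a := by
    rw [abs_mul, abs_of_pos (inv_pos.2 ha), inv_mul_eq_div]
    exact div_le_div_of_nonneg_right (hgM a self_mem_Ici) ha.le
  calc |∫ τ in Ioi a, h τ|
      ≤ |a⁻¹ * g a| + |∫ τ in Ioi a, (τ ^ 2)⁻¹ * g τ| := by
        rw [hibp]; simpa using abs_add_le (-(a⁻¹ * g a)) _
    _ ≤ M / a + M / a := add_le_add hbdry (abs_integral_Ioi_inv_sq_mul_le ha hgM)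
    _ = 2 * M / a := by ring

end ImproperIntegral

theorem hasDerivAt_besselJ_zero_sqrt_sq_sub_sq {r τ : ℝ} (h : r ^ 2 < τ ^ 2) :
    HasDerivAt (fun τ => besselJ 0 √(τ ^ 2 - r ^ 2))
      (τ * (besselJ 1 √(τ ^ 2 - r ^ 2) / √(τ ^ 2 - r ^ 2))) τ := by
  have hpos : 0 < τ ^ 2 - r ^ 2 := sub_pos.2 h
  have hsqrt := ((hasDerivAt_pow 2 τ).sub_const (r ^ 2)).sqrt hpos.ne'
  refine ((hasDerivAt_besselJ_zero _).comp τ hsqrt).congr_deriv ?_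
  norm_num
  ring

theorem abs_integral_Ioi_besselJ_one_sqrt_sq_sub_sq_le {r a : ℝ} (ha : 0 < a) (hra : |r| ≤ a) :
    |∫ τ in Ioi a, besselJ 1 √(τ ^ 2 - r ^ 2) / √(τ ^ 2 - r ^ 2)| ≤ 2 / a := by
  simpa using abs_integral_Ioi_le_of_hasDerivAt_mul (M := 1) ha
    (continuous_besselJ_zero.comp
      (by fun_prop : Continuous fun τ : ℝ => √(τ ^ 2 - r ^ 2))).continuousOn
    (fun τ hτ => hasDerivAt_besselJ_zero_sqrt_sq_sub_sq
      (sq_lt_sq.2 ((hra.trans_lt hτ).trans_le (le_abs_self τ))))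
    (fun τ _ => abs_besselJ_le_one 0 _)

/-- There is an absolute constant `C > 0` such that for every `r > 0` and every `t ≥ 0`,
`|C₁(r,t)| ≤ C / r`. -/
theorem C1_pointwise_r_bound :
    ∃ C : ℝ, 0 < C ∧ ∀ r t : ℝ, 0 < r → 0 ≤ t → |C1 r t| ≤ C / r := by
  refine ⟨3 / (4 * π), by positivity, fun r t hr _ => ?_⟩
  have hind : |(if t < r then r⁻¹ else 0)| ≤ r⁻¹ := by
    split_ifs
    · exact (abs_of_pos (inv_pos.2 hr)).le
    · simpa using hr.le
  have hint : |∫ τ in Ioi (max t r), besselJ 1 √(τ ^ 2 - r ^ 2) / √(τ ^ 2 - r ^ 2)| ≤ 2 / r :=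
    (abs_integral_Ioi_besselJ_one_sqrt_sq_sub_sq_le (lt_max_of_lt_right hr)
      ((abs_of_pos hr).trans_le (le_max_right t r)) ).trans
      (div_le_div_of_nonneg_left zero_le_two hr (le_max_right t r))
  rw [C1, abs_mul, abs_of_pos (by positivity)]
  calc 1 / (4 * π) * |(if t < r then r⁻¹ else 0) -
        ∫ τ in Ioi (max t r), besselJ 1 √(τ ^ 2 - r ^ 2) / √(τ ^ 2 - r ^ 2)|
      ≤ 1 / (4 * π) * (r⁻¹ + 2 / r) := by gcongr; exact (abs_sub _ _).trans (add_le_add hind hint)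
    _ = 3 / (4 * π) / r := by field_simp; ring
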